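/- arXiv:1810.05999 — 2 statements merged into one kernel-verified Lean document; each statement's English description precedes it below -/
import Mathlib

section
/- Let V be a locally-convex topological vector space, C a closed convex subset of V, p ∈ C, and v ∈ V. If there exists a sequence (v_i) in the tangent cone of C at p (i.e., each p + t_i v_i ∈ C for some t_i > 0) with v_i → v, then there exists a continuous curve c : [0,∞) → C with c(0) = p and lim_{t→0+} (c(t) - p)/t = v. -/
open Filter Topology Set

/-!
Pick `T i > 0` with `p + T i • u i ∈ C`; by convexity all of `p + [0, T i] • u i` lies in `C`.
Re-indexing `u` with repetitions gives directions `w k → v` such that `w k` and `w (k + 1)` are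
both admissible up to time `s / (k + 1)`. Interpolating `w` piecewise linearly in the variable
`s / t - 1` yields a continuous direction field `d` with `d t → v` as `t → 0+`, and `d t` is a
convex combination of two directions admissible at time `t`, so `p + t • d t ∈ C`. The curve is
`c t = p + t • d t`, frozen at time `s`.
-/

section PiecewiseLinear

variable {V : Type*} [AddCommGroup V] [Module ℝ V]

noncomputable def piecewiseLinear (g : ℤ → V) (x : ℝ) : V :=
  (1 - Int.fract x) • g ⌊x⌋ + Int.fract x • g (⌊x⌋ + 1)

lemma piecewiseLinear_eq_of_mem_Icc (g : ℤ → V) {n : ℤ} {x : ℝ}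
    (hx : x ∈ Icc (n : ℝ) (n + 1)) :
    piecewiseLinear g x = (1 - (x - n)) • g n + (x - n) • g (n + 1) := by
  rcases hx.2.lt_or_eq with hlt | rfl
  · have hfloor : ⌊x⌋ = n := Int.floor_eq_iff.mpr ⟨hx.1, hlt⟩
    rw [piecewiseLinear, Int.fract, hfloor]
  · have hfloor : ⌊(n : ℝ) + 1⌋ = n + 1 := by exact_mod_cast Int.floor_intCast (n + 1)
    simp [piecewiseLinear, hfloor]

variable [TopologicalSpace V]

lemma tendsto_piecewiseLinear_atTop [LocallyConvexSpace ℝ V] {g : ℤ → V} {v : V}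
    (hg : Tendsto g atTop (𝓝 v)) : Tendsto (piecewiseLinear g) atTop (𝓝 v) := by
  rw [(LocallyConvexSpace.convex_basis (𝕜 := ℝ) v).tendsto_right_iff]
  rintro U ⟨hU, hUc⟩
  obtain ⟨N, hN⟩ := eventually_atTop.mp (hg.eventually_mem hU)
  filter_upwards [eventually_ge_atTop (N : ℝ)] with x hx
  have hNx : N ≤ ⌊x⌋ := Int.le_floor.mpr hx
  exact hUc (hN _ hNx) (hN _ (by omega)) (by linarith [Int.fract_lt_one x])
    (Int.fract_nonneg x) (by ring)

variable [IsTopologicalAddGroup V] [ContinuousSMul ℝ V]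

lemma continuous_piecewiseLinear (g : ℤ → V) : Continuous (piecewiseLinear g) := by
  refine (locallyFinite_Icc_of_tendsto (f := fun n : ℤ => (n : ℝ)) (g := fun n => (n : ℝ) + 1)
    tendsto_intCast_atTop_atTop ?_).continuous (iUnion_Icc_intCast ℝ) (fun _ => isClosed_Icc)
    fun n => ?_
  · exact tendsto_atBot_add_const_right _ 1 (tendsto_intCast_atBot_iff.2 tendsto_id)
  · refine Continuous.continuousOn ?_ |>.congr fun x hx => piecewiseLinear_eq_of_mem_Icc g hx
    fun_prop

end PiecewiseLinear

lemma exists_tendsto_atTop_and_le_comp {T ε : ℕ → ℝ} (hT : ∀ n, 0 < T n)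
    (hε : Tendsto ε atTop (𝓝 0)) (hεT : ∀ k, ε k ≤ T 0) :
    ∃ n : ℕ → ℕ, Tendsto n atTop atTop ∧ ∀ k, ε k ≤ T (n k) := by
  classical
  refine ⟨fun k => Nat.findGreatest (fun j => ε k ≤ T j) k, tendsto_atTop_atTop.2 fun N => ?_,
    fun k => Nat.findGreatest_spec (P := fun j => ε k ≤ T j) k.zero_le (hεT k)⟩
  obtain ⟨K, hK⟩ := eventually_atTop.mp (hε.eventually_lt_const (hT N))
  exact ⟨max K N, fun k hk => Nat.le_findGreatest (le_of_max_le_right hk)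
    (hK k (le_of_max_le_left hk)).le⟩

section Curve

variable {V : Type*} [AddCommGroup V] [Module ℝ V] {C : Set V} {p v : V}

lemma Convex.add_smul_mem_of_le (hC : Convex ℝ C) (hp : p ∈ C) {u : V} {T t : ℝ}
    (hT : p + T • u ∈ C) (ht : 0 ≤ t) (htT : t ≤ T) : p + t • u ∈ C := by
  rcases ht.eq_or_lt with rfl | ht
  · simpa using hp
  have hT0 : 0 < T := ht.trans_le htT
  simpa [smul_smul, div_mul_cancel₀ t hT0.ne'] using
    hC.add_smul_mem hp hT ⟨div_nonneg ht.le hT0.le, div_le_one_of_le₀ htT hT0.le⟩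

variable [TopologicalSpace V] [IsTopologicalAddGroup V] [ContinuousSMul ℝ V]

lemma exists_direction_field [LocallyConvexSpace ℝ V] (hC : Convex ℝ C) {s : ℝ} (hs : 0 < s)
    {w : ℕ → V} (hw : Tendsto w atTop (𝓝 v))
    (hwC : ∀ n : ℕ, ∀ t ∈ Ioc 0 (s / (n + 1)),
      p + t • w n ∈ C ∧ p + t • w (n + 1) ∈ C) :
    ∃ d : ℝ → V, ContinuousOn d (Ioi 0) ∧ Tendsto d (𝓝[>] 0) (𝓝 v) ∧
      ∀ t ∈ Ioc 0 s, p + t • d t ∈ C := by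
  set g : ℤ → V := fun n => w n.toNat
  have hg : Tendsto g atTop (𝓝 v) :=
    hw.comp <| tendsto_atTop_atTop.2 fun b => ⟨b, fun n hn => Int.le_toNat (by omega) |>.2 hn⟩
  refine ⟨fun t => piecewiseLinear g (s / t - 1), ?_, ?_, fun t ht => ?_⟩
  · exact (continuous_piecewiseLinear g).comp_continuousOn
      ((continuousOn_const.div continuousOn_id fun t ht => ht.ne').sub continuousOn_const)
  · refine (tendsto_piecewiseLinear_atTop hg).comp <| tendsto_atTop_add_const_right _ (-1) ?_
    exact tendsto_inv_nhdsGT_zero.const_mul_atTop hs |>.congr fun t => (div_eq_mul_inv s t).symm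
  · obtain ⟨ht0, hts⟩ := ht
    have hx0 : 0 ≤ s / t - 1 := by rw [sub_nonneg, one_le_div ht0]; exact hts
    set k := ⌊s / t - 1⌋₊
    have hk : (k : ℝ) ≤ s / t - 1 := Nat.floor_le hx0
    have hx : s / t - 1 ∈ Icc ((k : ℤ) : ℝ) ((k : ℤ) + 1) := by
      push_cast
      exact ⟨hk, (Nat.lt_floor_add_one _).le⟩
    have htk : t ∈ Ioc 0 (s / (k + 1)) := by
      rw [le_sub_iff_add_le, le_div_iff₀ ht0] at hk
      exact ⟨ht0, by rw [le_div_iff₀ (by positivity)]; linarith⟩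
    obtain ⟨hwk, hwk1⟩ := hwC k t htk
    set μ := s / t - 1 - ((k : ℤ) : ℝ)
    have hcomb : p + t • ((1 - μ) • w k + μ • w (k + 1)) =
        (1 - μ) • (p + t • w k) + μ • (p + t • w (k + 1)) := by
      module
    change p + t • piecewiseLinear g (s / t - 1) ∈ C
    rw [piecewiseLinear_eq_of_mem_Icc g hx]
    change p + t • ((1 - μ) • w k + μ • w (k + 1)) ∈ C
    rw [hcomb]
    exact hC hwk hwk1 (by linarith [hx.2]) (by linarith [hx.1]) (by ring)

lemma exists_curve_of_direction_field {d : ℝ → V} {s : ℝ} (hs : 0 < s) (hp : p ∈ C)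
    (hd : ContinuousOn d (Ioi 0)) (hdv : Tendsto d (𝓝[>] 0) (𝓝 v))
    (hdC : ∀ t ∈ Ioc 0 s, p + t • d t ∈ C) :
    ∃ c : ℝ → V, ContinuousOn c (Ici 0) ∧ (∀ t ∈ Ici (0:ℝ), c t ∈ C) ∧ c 0 = p ∧
      Tendsto (fun t : ℝ => t⁻¹ • (c t - p)) (𝓝[>] 0) (𝓝 v) := by
  set e : ℝ → V := fun τ => τ • d τ
  have he : ContinuousOn e (Ici 0) := by
    intro τ hτ
    rcases (mem_Ici.1 hτ).eq_or_lt with rfl | hτ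
    · rw [← Ioi_insert, continuousWithinAt_insert_self, ContinuousWithinAt]
      simpa [e] using (tendsto_nhdsWithin_of_tendsto_nhds tendsto_id).smul hdv
    · exact (continuousAt_id.smul (hd.continuousAt (Ioi_mem_nhds hτ))).continuousWithinAt
  refine ⟨fun t => p + e (min t s), ?_, fun t ht => ?_, by simp [e, hs.le], ?_⟩
  · exact continuousOn_const.add <|
      he.comp (continuous_id.min continuous_const).continuousOn fun t ht => le_min ht hs.le
  · rcases (mem_Ici.1 ht).eq_or_lt with rfl | ht
    · simpa [e, hs.le] using hp
    · exact hdC _ ⟨lt_min ht hs, min_le_right _ _⟩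
  · refine hdv.congr' ?_
    filter_upwards [Ioo_mem_nhdsGT hs] with t ht
    simp [e, min_eq_left ht.2.le, smul_smul, inv_mul_cancel₀ ht.1.ne']

end Curve

theorem stmt0_general {V : Type*} [AddCommGroup V] [Module ℝ V] [TopologicalSpace V]
    [IsTopologicalAddGroup V] [ContinuousSMul ℝ V] [LocallyConvexSpace ℝ V]
    (C : Set V) (hconv : Convex ℝ C) (p : V) (hp : p ∈ C) (v : V)
    (u : ℕ → V) (hu : ∀ i, ∃ t : ℝ, 0 < t ∧ p + t • u i ∈ C)
    (hlim : Tendsto u atTop (𝓝 v)) :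
    ∃ c : ℝ → V, ContinuousOn c (Ici 0) ∧ (∀ t ∈ Ici (0:ℝ), c t ∈ C) ∧ c 0 = p ∧
      Tendsto (fun t : ℝ => t⁻¹ • (c t - p)) (𝓝[>] 0) (𝓝 v) := by
  choose T hT hTC using hu
  have hε : Tendsto (fun k : ℕ => T 0 / (k + 1)) atTop (𝓝 0) := by
    simpa [Function.comp_def] using
      (tendsto_const_div_atTop_nhds_zero_nat (T 0)).comp (tendsto_add_atTop_nat 1)
  obtain ⟨n, hn, hTn⟩ :=
    exists_tendsto_atTop_and_le_comp hT hε fun k => div_le_self (hT 0).le (by simp)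
  have hray : ∀ k : ℕ, ∀ t ∈ Ioc 0 (T 0 / (k + 1)), p + t • u (n k) ∈ C :=
    fun k t ht => hconv.add_smul_mem_of_le hp (hTC _) ht.1.le (ht.2.trans (hTn k))
  have hscale (k : ℕ) : T 0 / 2 / (k + 1) ≤ T 0 / ((k + 1 : ℕ) + 1) := by
    rw [div_div]; push_cast; gcongr <;> linarith [hT 0]
  obtain ⟨d, hd, hdv, hdC⟩ := exists_direction_field hconv (half_pos (hT 0)) (hlim.comp hn)
    fun k t ht => ⟨hray k t ⟨ht.1, ht.2.trans (by gcongr; exact half_le_self (hT 0).le)⟩,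
      hray (k + 1) t ⟨ht.1, ht.2.trans (hscale k)⟩⟩
  exact exists_curve_of_direction_field (half_pos (hT 0)) hp hd hdv hdC

/-- If `v` is the limit of a sequence in the tangent cone of the closed
convex set `C` at `p ∈ C`, then there is a continuous curve in `C` starting at `p`
with right derivative `v` at `0`. -/
theorem stmt0 {V : Type*} [AddCommGroup V] [Module ℝ V] [TopologicalSpace V]
    [IsTopologicalAddGroup V] [ContinuousSMul ℝ V] [LocallyConvexSpace ℝ V]
    (C : Set V) (hC : IsClosed C) (hconv : Convex ℝ C) (p : V) (hp : p ∈ C) (v : V)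
    (u : ℕ → V) (hu : ∀ i, ∃ t : ℝ, 0 < t ∧ p + t • u i ∈ C)
    (hlim : Tendsto u atTop (𝓝 v)) :
    ∃ c : ℝ → V, ContinuousOn c (Ici 0) ∧ (∀ t ∈ Ici (0:ℝ), c t ∈ C) ∧ c 0 = p ∧
      Tendsto (fun t : ℝ => t⁻¹ • (c t - p)) (𝓝[>] 0) (𝓝 v) :=
  stmt0_general C hconv p hp v u hu hlim
end

section
/- Let V be a normed space, C a closed convex subset, p ∈ C, and v ∈ V. There exists a continuous curve c : [0,∞) → C with c(0) = p and right derivative v at 0 if and only if θ(v) ≥ 0 for every continuous linear functional θ on V satisfying θ(p) = inf_{q ∈ C} θ(q). -/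
/-!
Necessity: apply `θ` to the difference quotients `t⁻¹ • (c t - p)`, which are nonnegative.

Sufficiency: by Hahn–Banach, `v` lies in the closure of the cone generated by `C - p`, and
moving along nearby directions of that cone shows `infDist (p + t • v) C = o(t)`. A partition of
unity on `(0, ∞)` then selects continuously points `c t ∈ C` with
`‖c t - (p + t • v)‖ < infDist (p + t • v) C + t ^ 2`, which is `o(t)`; so `c`, extended by
`c 0 = p`, has right derivative `v` at `0`.
-/

open Filter Topology Set Metric Asymptotics

section
variable {V : Type*} [NormedAddCommGroup V] [NormedSpace ℝ V]

theorem mem_closure_convexConeHull_of_forall_nonneg {s : Set V} (h0 : (0 : V) ∈ s) {v : V}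
    (hv : ∀ θ : V →L[ℝ] ℝ, (∀ y ∈ s, 0 ≤ θ y) → 0 ≤ θ v) :
    v ∈ closure (ConvexCone.hull ℝ s : Set V) := by
  by_contra hvK
  let K : ProperCone ℝ V :=
    Submodule.closure ((ConvexCone.hull ℝ s).toPointedCone (ConvexCone.subset_hull h0))
  obtain ⟨θ, hθK, hθv⟩ := K.hyperplane_separation_point hvK
  exact hθv.not_ge (hv θ fun y hy => hθK y (subset_closure (ConvexCone.subset_hull hy)))

theorem Convex.isLittleO_infDist_add_smul {C : Set V} (hconv : Convex ℝ C) {p v : V}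
    (hp : p ∈ C) (hv : ∀ θ : V →L[ℝ] ℝ, (∀ q ∈ C, θ p ≤ θ q) → 0 ≤ θ v) :
    (fun t : ℝ => infDist (p + t • v) C) =o[𝓝[>] 0] fun t => t := by
  set s := (p + ·) ⁻¹' C
  have hs : Convex ℝ s := hconv.translate_preimage_right p
  have h0 : (0 : V) ∈ s := by simpa [s] using hp
  have hvK : v ∈ closure (ConvexCone.hull ℝ s : Set V) :=
    mem_closure_convexConeHull_of_forall_nonneg h0 fun θ hθ =>
      hv θ fun q hq => by simpa using hθ (q - p) (by simpa [s] using hq)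
  rw [isLittleO_iff]
  intro ε hε
  obtain ⟨w, hw, hvw⟩ := Metric.mem_closure_iff.1 hvK ε hε
  obtain ⟨c, hc, y, hy, rfl⟩ := (ConvexCone.mem_hull_of_convex hs).1 hw
  filter_upwards [Ioo_mem_nhdsGT (inv_pos.2 hc)] with t ⟨ht0, htc⟩
  have hwC : p + t • c • y ∈ C := by
    rw [smul_smul]
    exact hs.smul_mem_of_zero_mem h0 hy ⟨by positivity, by nlinarith [mul_inv_cancel₀ hc.ne']⟩
  calc ‖infDist (p + t • v) C‖ = infDist (p + t • v) C := Real.norm_of_nonneg infDist_nonneg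
    _ ≤ dist (p + t • v) (p + t • c • y) := infDist_le_dist_of_mem hwC
    _ = t * dist v (c • y) := by rw [dist_add_left, dist_smul₀, Real.norm_of_nonneg ht0.le]
    _ ≤ ε * ‖t‖ := by
      rw [Real.norm_of_nonneg ht0.le, mul_comm]
      exact mul_le_mul_of_nonneg_right hvw.le ht0.le

theorem Convex.exists_continuous_forall_mem_dist_lt_infDist_add {X : Type*}
    [TopologicalSpace X] [NormalSpace X] [ParacompactSpace X] {C : Set V} (hconv : Convex ℝ C)
    (hne : C.Nonempty) {γ : X → V} (hγ : Continuous γ) {r : X → ℝ} (hr : Continuous r)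
    (hr0 : ∀ x, 0 < r x) :
    ∃ g : C(X, V), ∀ x, g x ∈ C ∧ dist (g x) (γ x) < infDist (γ x) C + r x := by
  refine exists_continuous_forall_mem_convex_of_local_const
    (fun x => hconv.inter (convex_ball (γ x) (infDist (γ x) C + r x))) fun x => ?_
  obtain ⟨q, hqC, hq⟩ := (infDist_lt_iff hne).1 (lt_add_of_pos_right _ (hr0 x))
  refine ⟨q, ?_⟩
  have hcont : Continuous fun y => infDist (γ y) C + r y - dist q (γ y) := by
    have := (continuous_infDist_pt C).comp hγ
    fun_prop
  have hqx : 0 < infDist (γ x) C + r x - dist q (γ x) := sub_pos.2 (by rwa [dist_comm] at hq)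
  filter_upwards [continuousAt_const.eventually_lt hcont.continuousAt hqx] with y hy
  exact ⟨hqC, sub_pos.1 hy⟩

theorem Convex.exists_curve_of_isLittleO_infDist {C : Set V} (hconv : Convex ℝ C) {p v : V}
    (hp : p ∈ C) (hv : (fun t : ℝ => infDist (p + t • v) C) =o[𝓝[>] 0] fun t => t) :
    ∃ c : ℝ → V, ContinuousOn c (Ici 0) ∧ (∀ t ∈ Ici (0:ℝ), c t ∈ C) ∧ c 0 = p ∧
      Tendsto (fun t : ℝ => t⁻¹ • (c t - p)) (𝓝[>] 0) (𝓝 v) := by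
  obtain ⟨g, hg⟩ := hconv.exists_continuous_forall_mem_dist_lt_infDist_add ⟨p, hp⟩
    (γ := fun t : Ioi (0 : ℝ) => p + (t : ℝ) • v) (by fun_prop) (r := fun t => (t : ℝ) ^ 2)
    (by fun_prop) fun t => pow_pos t.2 2
  let c : ℝ → V := fun t => if ht : 0 < t then g ⟨t, ht⟩ else p
  have hc0 : c 0 = p := dif_neg (lt_irrefl 0)
  have hcC : ∀ t ∈ Ici (0:ℝ), c t ∈ C := by
    intro t ht
    rcases (mem_Ici.1 ht).eq_or_lt with rfl | ht
    · rwa [hc0]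
    · simpa [c, ht] using (hg ⟨t, ht⟩).1
  have hcont : ContinuousOn c (Ioi 0) := by
    rw [continuousOn_iff_continuous_domRestrict]
    convert g.continuous using 1
    funext t
    exact dif_pos t.2
  have hderiv : HasDerivWithinAt c v (Ioi 0) 0 := by
    rw [hasDerivWithinAt_iff_isLittleO, hc0]
    simp only [sub_zero]
    refine IsBigO.trans_isLittleO (g := fun t => infDist (p + t • v) C + t ^ 2) ?_
      (hv.add ((isLittleO_pow_id one_lt_two).mono nhdsWithin_le_nhds))
    refine IsBigO.of_bound' ?_
    filter_upwards [self_mem_nhdsWithin] with t (ht : 0 < t)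
    have := (hg ⟨t, ht⟩).2
    simp only [c, dif_pos ht, ← dist_eq_norm, sub_sub] at this ⊢
    exact this.le.trans (Real.le_norm_self _)
  refine ⟨c, fun t ht => ?_, hcC, hc0, ?_⟩
  · rcases (mem_Ici.1 ht).eq_or_lt with rfl | ht
    · exact (hasDerivWithinAt_Ioi_iff_Ici.1 hderiv).continuousWithinAt
    · exact (hcont.continuousAt (Ioi_mem_nhds ht)).continuousWithinAt
  · have hslope : slope c 0 = fun t => t⁻¹ • (c t - p) := by
      funext t
      rw [slope_def_module, hc0, sub_zero]
    exact hslope ▸ (hasDerivWithinAt_iff_tendsto_slope' (lt_irrefl (0 : ℝ))).1 hderiv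

theorem apply_nonneg_of_tendsto_inv_smul_sub {C : Set V} {p v : V} {c : ℝ → V}
    (hcC : ∀ t > 0, c t ∈ C)
    (hv : Tendsto (fun t : ℝ => t⁻¹ • (c t - p)) (𝓝[>] 0) (𝓝 v))
    {θ : V →L[ℝ] ℝ} (hθ : ∀ q ∈ C, θ p ≤ θ q) : 0 ≤ θ v := by
  refine ge_of_tendsto ((θ.continuous.tendsto v).comp hv) ?_
  filter_upwards [self_mem_nhdsWithin] with t (ht : 0 < t)
  simpa using mul_nonneg (inv_nonneg.2 ht.le) (sub_nonneg.2 (hθ _ (hcC t ht)))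

end

theorem stmt2_general {V : Type*} [NormedAddCommGroup V] [NormedSpace ℝ V]
    (C : Set V) (hconv : Convex ℝ C) (p : V) (hp : p ∈ C) (v : V) :
    (∃ c : ℝ → V, ContinuousOn c (Ici 0) ∧ (∀ t ∈ Ici (0:ℝ), c t ∈ C) ∧ c 0 = p ∧
        Tendsto (fun t : ℝ => t⁻¹ • (c t - p)) (𝓝[>] 0) (𝓝 v)) ↔
      ∀ θ : V →L[ℝ] ℝ, (∀ q ∈ C, θ p ≤ θ q) → 0 ≤ θ v := by
  constructor
  · rintro ⟨c, -, hcC, -, hv⟩ θ hθ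
    exact apply_nonneg_of_tendsto_inv_smul_sub (fun t ht => hcC t (le_of_lt ht)) hv hθ
  · intro hv
    exact hconv.exists_curve_of_isLittleO_infDist hp (hconv.isLittleO_infDist_add_smul hp hv)

/-- In a normed space, a continuous curve in the closed convex set `C`
starting at `p` with right derivative `v` exists iff `θ v ≥ 0` for every continuous
linear functional `θ` attaining its minimum over `C` at `p`. -/
theorem stmt2 {V : Type*} [NormedAddCommGroup V] [NormedSpace ℝ V]
    (C : Set V) (hC : IsClosed C) (hconv : Convex ℝ C) (p : V) (hp : p ∈ C) (v : V) :
    (∃ c : ℝ → V, ContinuousOn c (Ici 0) ∧ (∀ t ∈ Ici (0:ℝ), c t ∈ C) ∧ c 0 = p ∧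
        Tendsto (fun t : ℝ => t⁻¹ • (c t - p)) (𝓝[>] 0) (𝓝 v)) ↔
      ∀ θ : V →L[ℝ] ℝ, (∀ q ∈ C, θ p ≤ θ q) → 0 ≤ θ v :=
  stmt2_general C hconv p hp v
end
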